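/- arXiv:2603.18403 — 4 statements merged into one kernel-verified Lean document; each statement's English description precedes it below -/
import Mathlib

section
/- The dual lifting filter of order 6 with coefficients (3/256, -25/256, 75/128, 75/128, -25/256, 3/256) applied at offsets (-5h, -3h, -h, h, 3h, 5h) exactly reproduces all polynomials of degree at most 5: for every polynomial p with deg p ≤ 5, every h > 0 and x ∈ ℝ, p(x) = (3/256)p(x-5h) - (25/256)p(x-3h) + (75/128)p(x-h) + (75/128)p(x+h) - (25/256)p(x+3h) + (3/256)p(x+5h). -/
/-- The order-6 dual lifting filter `(3/256, -25/256, 75/128, 75/128, -25/256, 3/256)` at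
offsets `(-5h, -3h, -h, h, 3h, 5h)` exactly reproduces polynomials of degree at most 5. -/
theorem dual_lifting_order6_reproduces_quintics
    (p : Polynomial ℝ) (hdeg : p.natDegree ≤ 5) (h : ℝ) (hh : 0 < h) (x : ℝ) :
    p.eval x =
      3/256 * p.eval (x - 5*h) - 25/256 * p.eval (x - 3*h) + 75/128 * p.eval (x - h)
        + 75/128 * p.eval (x + h) - 25/256 * p.eval (x + 3*h) + 3/256 * p.eval (x + 5*h) := by
  have := Polynomial.as_sum_range' p 6 (lt_of_le_of_lt hdeg (by norm_num))
  rw [this]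
  simp [Polynomial.eval_finset_sum, Finset.sum_range_succ]
  ring
end

section
/- Let ε be a polynomial of degree at most N-1 that vanishes at k distinct grid points x_1,...,x_k, and whose derivatives satisfy |ε^{(m)}(x_{c,1})| ≤ C h^{N-m} for m = 1,...,α and |ε^{(n)}(x_{c,2})| ≤ C h^{N-n} for n = 1,...,β, where α + β + k = N and all points lie in an interval of length at most C'h. Assume the associated Hermite-like interpolation problem is uniquely solvable on the normalized grid. Then there is a constant C'' (depending only on the normalized node configuration, C, C', N) such that |ε(x)| ≤ C'' h^N for all x ∈ [x_{c,1}, x_{c,2}]. -/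
/-!
Rescale by `x = h t`. On the normalized configuration the data map
`q ↦ (q (y i), q^(m) c₁, q^(n) c₂)` is injective on polynomials of degree `≤ N - 1`, so, the space
being finite-dimensional, it is bounded below there: `|q t| ≤ K ‖data q‖` uniformly for `t` in a
bounded set. For `q t = ε (h t)` the `m`-th derivative picks up a factor `h ^ m`, which turns the
hypotheses `O(h ^ (N - m))` into `‖data q‖ = O(h ^ N)`.
-/

open Polynomial

namespace Polynomial

theorem iterate_derivative_comp_C_mul_X {R : Type*} [CommSemiring R] (p : R[X]) (a : R) (m : ℕ) :
    derivative^[m] (p.comp (C a * X)) = C (a ^ m) * (derivative^[m] p).comp (C a * X) := by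
  induction m with
  | zero => simp
  | succ m ih =>
    rw [Function.iterate_succ_apply', ih, derivative_C_mul, derivative_comp,
      Function.iterate_succ_apply', pow_succ, C_mul]
    simp only [derivative_C_mul_X]
    ring

theorem abs_eval_iterate_derivative_comp_C_mul_X_le {p : ℝ[X]} {h c B : ℝ} {m N : ℕ}
    (hh : 0 ≤ h) (hmN : m ≤ N) (hp : |(derivative^[m] p).eval (h * c)| ≤ B * h ^ (N - m)) :
    |(derivative^[m] (p.comp (C h * X))).eval c| ≤ B * h ^ N := by
  rw [iterate_derivative_comp_C_mul_X, eval_mul, eval_C, eval_comp, eval_mul, eval_C, eval_X,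
    abs_mul, abs_of_nonneg (pow_nonneg hh m)]
  calc h ^ m * |(derivative^[m] p).eval (h * c)| ≤ h ^ m * (B * h ^ (N - m)) := by gcongr
    _ = B * h ^ N := by rw [mul_left_comm, ← pow_add, Nat.add_sub_cancel' hmN]

theorem abs_eval_le_of_mem_degreeLT {n : ℕ} {p : ℝ[X]} (hp : p ∈ degreeLT ℝ n) {t R : ℝ}
    (ht : |t| ≤ R) (hR : 1 ≤ R) :
    |p.eval t| ≤ n * R ^ n * ‖degreeLTEquiv ℝ n ⟨p, hp⟩‖ := by
  set a := degreeLTEquiv ℝ n ⟨p, hp⟩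
  rw [eval_eq_sum_degreeLTEquiv hp]
  calc |∑ i, a i * t ^ (i : ℕ)| ≤ ∑ i, |a i * t ^ (i : ℕ)| := Finset.abs_sum_le_sum_abs _ _
    _ ≤ ∑ _i : Fin n, ‖a‖ * R ^ n := Finset.sum_le_sum fun i _ => by
        rw [abs_mul, abs_pow, ← Real.norm_eq_abs]
        gcongr
        · exact norm_le_pi_norm a i
        · exact (pow_le_pow_left₀ (abs_nonneg t) ht _).trans (pow_le_pow_right₀ hR i.2.le)
    _ = n * R ^ n * ‖a‖ := by
        rw [Finset.sum_const, Finset.card_univ, Fintype.card_fin, nsmul_eq_mul]; ring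

theorem exists_abs_eval_le_mul_norm {F : Type*} [NormedAddCommGroup F] [NormedSpace ℝ F]
    (L : ℝ[X] →ₗ[ℝ] F) (d : ℕ) (hL : ∀ q : ℝ[X], q.natDegree ≤ d → L q = 0 → q = 0) (R : ℝ) :
    ∃ K, 0 ≤ K ∧ ∀ q : ℝ[X], q.natDegree ≤ d → ∀ t, |t| ≤ R → |q.eval t| ≤ K * ‖L q‖ := by
  have mem_iff {q : ℝ[X]} : q ∈ degreeLT ℝ (d + 1) ↔ q.natDegree ≤ d := by
    rw [degreeLT_succ_eq_degreeLE, mem_degreeLE, natDegree_le_iff_degree_le]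
  let e := degreeLTEquiv ℝ (d + 1)
  let f := L ∘ₗ (degreeLT ℝ (d + 1)).subtype ∘ₗ e.symm.toLinearMap
  have hf : LinearMap.ker f = ⊥ := by
    refine LinearMap.ker_eq_bot'.2 fun a ha => e.symm.injective (Subtype.ext ?_)
    simpa using hL _ (mem_iff.1 (e.symm a).2) ha
  obtain ⟨A, -, hA⟩ := f.exists_antilipschitzWith hf
  refine ⟨(d + 1) * max 1 R ^ (d + 1) * A, by positivity, fun q hq t ht => ?_⟩
  have hfq : f (e ⟨q, mem_iff.2 hq⟩) = L q := by simp [f]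
  calc |q.eval t| ≤ (d + 1) * max 1 R ^ (d + 1) * ‖e ⟨q, mem_iff.2 hq⟩‖ := by
        exact_mod_cast abs_eval_le_of_mem_degreeLT _ (ht.trans (le_max_right _ _)) (le_max_left _ _)
    _ ≤ (d + 1) * max 1 R ^ (d + 1) * (A * ‖L q‖) := by
        gcongr
        rw [← hfq]
        exact ZeroHomClass.bound_of_antilipschitz f hA _
    _ = _ := by ring

noncomputable def derivativeData (S : Finset ℕ) (c : ℝ) : ℝ[X] →ₗ[ℝ] (S → ℝ) :=
  LinearMap.pi fun m => leval c ∘ₗ derivative ^ (m : ℕ)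

theorem derivativeData_apply (S : Finset ℕ) (c : ℝ) (p : ℝ[X]) (m : S) :
    derivativeData S c p m = (derivative^[m] p).eval c := by
  simp [derivativeData, Module.End.pow_apply]

noncomputable def hermiteData {k : ℕ} (y : Fin k → ℝ) (c₁ : ℝ) (S₁ : Finset ℕ) (c₂ : ℝ)
    (S₂ : Finset ℕ) :
    ℝ[X] →ₗ[ℝ] (Fin k → ℝ) × (S₁ → ℝ) × (S₂ → ℝ) :=
  (LinearMap.pi fun i => leval (y i)).prod ((derivativeData S₁ c₁).prod (derivativeData S₂ c₂))

section

variable {k : ℕ} {y : Fin k → ℝ} {c₁ : ℝ} {S₁ : Finset ℕ} {c₂ : ℝ} {S₂ : Finset ℕ} {p : ℝ[X]}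

theorem hermiteData_eq_zero_iff : hermiteData y c₁ S₁ c₂ S₂ p = 0 ↔
    (∀ i, p.eval (y i) = 0) ∧ (∀ m ∈ S₁, (derivative^[m] p).eval c₁ = 0) ∧
      ∀ n ∈ S₂, (derivative^[n] p).eval c₂ = 0 := by
  simp [hermiteData, Prod.ext_iff, funext_iff, derivativeData_apply]

theorem norm_hermiteData_le {B : ℝ} (hB : 0 ≤ B) (h₀ : ∀ i, |p.eval (y i)| ≤ B)
    (h₁ : ∀ m ∈ S₁, |(derivative^[m] p).eval c₁| ≤ B)
    (h₂ : ∀ n ∈ S₂, |(derivative^[n] p).eval c₂| ≤ B) :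
    ‖hermiteData y c₁ S₁ c₂ S₂ p‖ ≤ B := by
  simp only [hermiteData, LinearMap.prod_apply, Function.prod_apply, norm_prod_le_iff,
    pi_norm_le_iff_of_nonneg hB, derivativeData_apply, Real.norm_eq_abs]
  exact ⟨h₀, fun m => h₁ m m.2, fun n => h₂ n n.2⟩

end

end Polynomial

theorem small_data_hermite_like_bound_general
    (N k α β : ℕ) (hsum : α + β + k = N)
    (y : Fin k → ℝ)
    (c₁ c₂ : ℝ)
    (huniq : ∀ q : Polynomial ℝ, q.natDegree ≤ N - 1 →
      (∀ i, q.eval (y i) = 0) →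
      (∀ m ∈ Finset.Icc 1 α, (Polynomial.derivative^[m] q).eval c₁ = 0) →
      (∀ n ∈ Finset.Icc 1 β, (Polynomial.derivative^[n] q).eval c₂ = 0) → q = 0)
    (C : ℝ) (hC : 0 ≤ C) :
    ∃ C'' : ℝ, 0 ≤ C'' ∧ ∀ h : ℝ, 0 < h →
      ∀ ε : Polynomial ℝ, ε.natDegree ≤ N - 1 →
        (∀ i, ε.eval (h * y i) = 0) →
        (∀ m ∈ Finset.Icc 1 α,
          |(Polynomial.derivative^[m] ε).eval (h * c₁)| ≤ C * h ^ (N - m)) →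
        (∀ n ∈ Finset.Icc 1 β,
          |(Polynomial.derivative^[n] ε).eval (h * c₂)| ≤ C * h ^ (N - n)) →
        ∀ x ∈ Set.Icc (h * c₁) (h * c₂), |ε.eval x| ≤ C'' * h ^ N := by
  set L := hermiteData y c₁ (Finset.Icc 1 α) c₂ (Finset.Icc 1 β)
  obtain ⟨K, hK, hL⟩ := exists_abs_eval_le_mul_norm L (N - 1)
    (fun q hq hLq => by
      obtain ⟨h₀, h₁, h₂⟩ := hermiteData_eq_zero_iff.1 hLq
      exact huniq q hq h₀ h₁ h₂) (max |c₁| |c₂|)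
  refine ⟨K * C, by positivity, fun h hh ε hε hε₀ hε₁ hε₂ x hx => ?_⟩
  set q := ε.comp (Polynomial.C h * X)
  have hq : q.natDegree ≤ N - 1 := by
    rwa [natDegree_comp, natDegree_C_mul_X h hh.ne', mul_one]
  have hLq : ‖L q‖ ≤ C * h ^ N := by
    have hB : 0 ≤ C * h ^ N := by positivity
    refine norm_hermiteData_le hB (fun i => ?_)
      (fun m hm => abs_eval_iterate_derivative_comp_C_mul_X_le hh.le ?_ (hε₁ m hm))
      (fun n hn => abs_eval_iterate_derivative_comp_C_mul_X_le hh.le ?_ (hε₂ n hn))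
    · simpa [q, eval_comp, hε₀] using hB
    · simp only [Finset.mem_Icc] at hm; omega
    · simp only [Finset.mem_Icc] at hn; omega
  have hxh : |x / h| ≤ max |c₁| |c₂| := abs_le_max_abs_abs
    ((le_div_iff₀ hh).2 (by linarith [hx.1])) ((div_le_iff₀ hh).2 (by linarith [hx.2]))
  calc |ε.eval x| = |q.eval (x / h)| := by simp [q, eval_comp, mul_div_cancel₀ x hh.ne']
    _ ≤ K * ‖L q‖ := hL q hq _ hxh
    _ ≤ K * (C * h ^ N) := by gcongr
    _ = K * C * h ^ N := by ring

/-- Proposition 2: a degree-`≤ N-1` polynomial `ε` vanishing at the `k` (scaled) grid points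
and whose derivatives at the two control points satisfy `|ε^{(m)}(h·c₁)| ≤ C h^{N-m}`,
`|ε^{(n)}(h·c₂)| ≤ C h^{N-n}`, is bounded by `C'' h^N` on `[h·c₁, h·c₂]`, with `C''`
depending only on the normalized node configuration, `C` and `N`. -/
theorem small_data_hermite_like_bound
    (N k α β : ℕ) (hN : 0 < N) (hsum : α + β + k = N)
    (y : Fin k → ℝ) (hy_inj : Function.Injective y)
    (c₁ c₂ : ℝ) (hc : c₁ < c₂)
    (hbox : ∀ i, y i ∈ Set.Icc c₁ c₂ ∧ c₂ - c₁ ≤ 1)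
    (huniq : ∀ q : Polynomial ℝ, q.natDegree ≤ N - 1 →
      (∀ i, q.eval (y i) = 0) →
      (∀ m ∈ Finset.Icc 1 α, (Polynomial.derivative^[m] q).eval c₁ = 0) →
      (∀ n ∈ Finset.Icc 1 β, (Polynomial.derivative^[n] q).eval c₂ = 0) → q = 0)
    (C : ℝ) (hC : 0 ≤ C) :
    ∃ C'' : ℝ, 0 ≤ C'' ∧ ∀ h : ℝ, 0 < h →
      ∀ ε : Polynomial ℝ, ε.natDegree ≤ N - 1 →
        (∀ i, ε.eval (h * y i) = 0) →
        (∀ m ∈ Finset.Icc 1 α,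
          |(Polynomial.derivative^[m] ε).eval (h * c₁)| ≤ C * h ^ (N - m)) →
        (∀ n ∈ Finset.Icc 1 β,
          |(Polynomial.derivative^[n] ε).eval (h * c₂)| ≤ C * h ^ (N - n)) →
        ∀ x ∈ Set.Icc (h * c₁) (h * c₂), |ε.eval x| ≤ C'' * h ^ N :=
  small_data_hermite_like_bound_general N k α β hsum y c₁ c₂ huniq C hC
end

section
/- Discrete a posteriori error bound: let A be an n×n real matrix with ‖exp(tA)‖ ≤ c·e^{ωt} for all t ≥ 0, where c ≥ 0, ω ≤ 0. Suppose e : [t_i, ∞) → ℝ^n satisfies e'(t) = A e(t) + τ(t) with ‖τ(t)‖ ≤ Cε for all t ≥ t_i and ‖e(t_i)‖ ≤ C_i ε. Then for all t ≥ t_i: if ω < 0, ‖e(t)‖ ≤ c·(e^{ω(t-t_i)} C_i + C·(e^{ω(t-t_i)} - 1)/ω)·ε; and if ω = 0, ‖e(t)‖ ≤ c·(C_i + C·(t - t_i))·ε. -/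
open NormedSpace

/-! Duhamel's formula writes `e(t) = exp((t - tᵢ)A) e(tᵢ) + ∫_{tᵢ}^t exp((t - s)A) τ(s) ds`.
Bounding the propagator by `c e^{ω(t - s)}` inside the integral leaves the scalar integral
`∫_0^{t - tᵢ} e^{ωu} du`, which is `(e^{ω(t - tᵢ)} - 1)/ω` for `ω ≠ 0` and `t - tᵢ` for `ω = 0`. -/

theorem integral_exp_mul_of_ne_zero {ω : ℝ} (hω : ω ≠ 0) (r : ℝ) :
    ∫ u in (0 : ℝ)..r, Real.exp (ω * u) = (Real.exp (ω * r) - 1) / ω := by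
  rw [intervalIntegral.integral_comp_mul_left Real.exp hω, integral_exp, mul_zero, Real.exp_zero,
    smul_eq_mul, inv_mul_eq_div]

section Duhamel

variable {E : Type*} [NormedAddCommGroup E] [NormedSpace ℝ E] [CompleteSpace E]
  (A : E →L[ℝ] E)

theorem hasDerivAt_exp_sub_smul (t s : ℝ) :
    HasDerivAt (fun r : ℝ => exp ((t - r) • A)) (-(exp ((t - s) • A) * A)) s := by
  simpa [Function.comp_def] using (hasDerivAt_exp_smul_const (𝕂 := ℝ) A (t - s)).scomp s
    ((hasDerivAt_id s).const_sub t)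

theorem continuous_exp_sub_smul (t : ℝ) : Continuous fun r : ℝ => exp ((t - r) • A) :=
  continuous_iff_continuousAt.2 fun s => (hasDerivAt_exp_sub_smul A t s).continuousAt

theorem hasDerivAt_exp_sub_smul_apply {e : ℝ → E} {f : E} {t s : ℝ}
    (he : HasDerivAt e (A (e s) + f) s) :
    HasDerivAt (fun r => exp ((t - r) • A) (e r)) (exp ((t - s) • A) f) s := by
  convert (hasDerivAt_exp_sub_smul A t s).clm_apply he using 1
  simp

theorem eq_exp_smul_add_integral_of_hasDerivAt {e τ : ℝ → E} {a t : ℝ} (hat : a ≤ t)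
    (he : ∀ s ∈ Set.Icc a t, HasDerivAt e (A (e s) + τ s) s)
    (hτ : ContinuousOn τ (Set.Icc a t)) :
    e t = exp ((t - a) • A) (e a) + ∫ s in a..t, exp ((t - s) • A) (τ s) := by
  rw [intervalIntegral.integral_eq_sub_of_hasDerivAt
    (fun s hs => hasDerivAt_exp_sub_smul_apply A (he s (Set.uIcc_of_le hat ▸ hs)))
    (((continuous_exp_sub_smul A t).continuousOn.clm_apply hτ).intervalIntegrable_of_Icc hat)]
  simp

theorem norm_le_of_hasDerivAt_of_norm_exp_smul_le {e τ : ℝ → E} {a t c ω K₀ K : ℝ}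
    (hat : a ≤ t)
    (hA : ∀ s, 0 ≤ s → ‖exp (s • A)‖ ≤ c * Real.exp (ω * s))
    (he : ∀ s ∈ Set.Icc a t, HasDerivAt e (A (e s) + τ s) s)
    (hτ : ContinuousOn τ (Set.Icc a t))
    (he₀ : ‖e a‖ ≤ K₀) (hτK : ∀ s ∈ Set.Icc a t, ‖τ s‖ ≤ K) :
    ‖e t‖ ≤ c * (Real.exp (ω * (t - a)) * K₀ + K * ∫ u in (0 : ℝ)..(t - a), Real.exp (ω * u)) := by
  have hprop : ∀ s ∈ Set.Icc a t, ∀ x : E,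
      ‖exp ((t - s) • A) x‖ ≤ c * Real.exp (ω * (t - s)) * ‖x‖ :=
    fun s hs x => (exp ((t - s) • A)).le_of_opNorm_le (hA _ (sub_nonneg.2 hs.2)) x
  have hprop_nonneg : ∀ s ∈ Set.Icc a t, 0 ≤ c * Real.exp (ω * (t - s)) :=
    fun s hs => (norm_nonneg _).trans (hA _ (sub_nonneg.2 hs.2))
  have hfree : ‖exp ((t - a) • A) (e a)‖ ≤ c * Real.exp (ω * (t - a)) * K₀ :=
    (hprop a ⟨le_rfl, hat⟩ _).trans
      (mul_le_mul_of_nonneg_left he₀ (hprop_nonneg a ⟨le_rfl, hat⟩))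
  have hforced : ‖∫ s in a..t, exp ((t - s) • A) (τ s)‖ ≤
      ∫ s in a..t, c * Real.exp (ω * (t - s)) * K := by
    refine intervalIntegral.norm_integral_le_of_norm_le hat
      (Filter.Eventually.of_forall fun s hs => ?_) (by apply Continuous.intervalIntegrable; fun_prop)
    have hs' : s ∈ Set.Icc a t := Set.Ioc_subset_Icc_self hs
    exact (hprop s hs' _).trans (mul_le_mul_of_nonneg_left (hτK s hs') (hprop_nonneg s hs'))
  have hint : ∫ s in a..t, c * Real.exp (ω * (t - s)) * K =
      c * K * ∫ u in (0 : ℝ)..(t - a), Real.exp (ω * u) := by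
    rw [intervalIntegral.integral_mul_const, intervalIntegral.integral_const_mul,
      intervalIntegral.integral_comp_sub_left (fun u => Real.exp (ω * u)), sub_self]
    ring
  calc ‖e t‖ ≤ ‖exp ((t - a) • A) (e a)‖ + ‖∫ s in a..t, exp ((t - s) • A) (τ s)‖ := by
        rw [eq_exp_smul_add_integral_of_hasDerivAt A hat he hτ]; exact norm_add_le _ _
    _ ≤ c * Real.exp (ω * (t - a)) * K₀ + c * K * ∫ u in (0 : ℝ)..(t - a), Real.exp (ω * u) := by
        rw [← hint]; exact add_le_add hfree hforced
    _ = _ := by ring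

end Duhamel

theorem aposteriori_error_bound_general
    {n : ℕ}
    (A : EuclideanSpace ℝ (Fin n) →L[ℝ] EuclideanSpace ℝ (Fin n))
    (c ω : ℝ)
    (hsg : ∀ t : ℝ, 0 ≤ t → ‖NormedSpace.exp (t • A)‖ ≤ c * Real.exp (ω * t))
    (tᵢ : ℝ) (e τ : ℝ → EuclideanSpace ℝ (Fin n))
    (hode : ∀ t, tᵢ ≤ t → HasDerivAt e (A (e t) + τ t) t)
    (hτcont : ContinuousOn τ (Set.Ici tᵢ))
    (C Cᵢ ε : ℝ)
    (hτ : ∀ t, tᵢ ≤ t → ‖τ t‖ ≤ C * ε)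
    (hinit : ‖e tᵢ‖ ≤ Cᵢ * ε) :
    ∀ t, tᵢ ≤ t →
      (ω < 0 → ‖e t‖ ≤
        c * (Real.exp (ω * (t - tᵢ)) * Cᵢ + C * ((Real.exp (ω * (t - tᵢ)) - 1) / ω)) * ε)
      ∧ (ω = 0 → ‖e t‖ ≤ c * (Cᵢ + C * (t - tᵢ)) * ε) := by
  intro t ht
  have hbound := norm_le_of_hasDerivAt_of_norm_exp_smul_le A ht hsg
    (fun s hs => hode s hs.1) (hτcont.mono Set.Icc_subset_Ici_self) hinit (fun s hs => hτ s hs.1)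
  refine ⟨fun hω => ?_, fun hω => ?_⟩
  · rw [integral_exp_mul_of_ne_zero hω.ne] at hbound
    exact hbound.trans_eq (by ring)
  · subst hω
    simp only [zero_mul, Real.exp_zero, intervalIntegral.integral_const, sub_zero, smul_eq_mul,
      mul_one, one_mul] at hbound
    exact hbound.trans_eq (by ring)

/-- Discrete a posteriori error bound (Duhamel + semigroup stability): if
`‖exp(tA)‖ ≤ c·e^{ωt}` for `t ≥ 0` with `ω ≤ 0`, and `e' = A e + τ` with `‖τ‖ ≤ C ε` and
`‖e(tᵢ)‖ ≤ Cᵢ ε`, then `‖e(t)‖` obeys the stated exponential bounds for all `t ≥ tᵢ`. -/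
theorem aposteriori_error_bound
    {n : ℕ}
    (A : EuclideanSpace ℝ (Fin n) →L[ℝ] EuclideanSpace ℝ (Fin n))
    (c ω : ℝ) (hc : 0 ≤ c) (hω : ω ≤ 0)
    (hsg : ∀ t : ℝ, 0 ≤ t → ‖NormedSpace.exp (t • A)‖ ≤ c * Real.exp (ω * t))
    (tᵢ : ℝ) (e τ : ℝ → EuclideanSpace ℝ (Fin n))
    (hode : ∀ t, tᵢ ≤ t → HasDerivAt e (A (e t) + τ t) t)
    (hτcont : ContinuousOn τ (Set.Ici tᵢ))
    (C Cᵢ ε : ℝ) (hε : 0 ≤ ε)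
    (hτ : ∀ t, tᵢ ≤ t → ‖τ t‖ ≤ C * ε)
    (hinit : ‖e tᵢ‖ ≤ Cᵢ * ε) :
    ∀ t, tᵢ ≤ t →
      (ω < 0 → ‖e t‖ ≤
        c * (Real.exp (ω * (t - tᵢ)) * Cᵢ + C * ((Real.exp (ω * (t - tᵢ)) - 1) / ω)) * ε)
      ∧ (ω = 0 → ‖e t‖ ≤ c * (Cᵢ + C * (t - tᵢ)) * ε) :=
  aposteriori_error_bound_general A c ω hsg tᵢ e τ hode hτcont C Cᵢ ε hτ hinit
end

section
/- For an N-th order interpolating wavelet transform applied to a function f ∈ C^{N+1}, the detail coefficient at level L and position m admits the expansion γ^L_m = C_N · f^{(N)}(x^L_{m+1/2}) · h^N + O(h^{N+1}) with h = 2^{-(L+1)}, where C_N = -(1/N!)·∏_{j=-N/2+1}^{N/2}(1-2j)·(up to sign) is a nonzero constant independent of f, h, and m; in particular |γ^L_m| ≤ C'·‖f^{(N)}‖_∞·h^N. -/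
/-!
The dual lifting weights are the values at `0` of the Lagrange basis on the nodes `2j - 1`.
Hence they reproduce the monomials `x^i`, `i < N`, exactly, while on `x^N` they miss by the
nodal polynomial at `0`, which is `∏ (1 - 2j)`. Weighting the Taylor expansions of `f` about `t`
at the samples `t + (2j - 1) h`, every term of order below `N` cancels against `f t`, the term of
order `N` leaves `∏ (1 - 2j) / N! · f^{(N)}(t) h^N`, and the Taylor remainders are `O(h^{N+1})`.
Expanding one order less gives the bound `O(‖f^{(N)}‖_∞ h^N)`.
-/

open Finset Polynomial

namespace Lagrange

variable {F ι : Type*} [Field F] [DecidableEq ι] {s : Finset ι} {v : ι → F}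

theorem eval_eq_sum_eval_basis_mul (hvs : Set.InjOn v s) {p : F[X]} (hp : p.degree < #s)
    (x : F) : p.eval x = ∑ j ∈ s, (Lagrange.basis s v j).eval x * p.eval (v j) := by
  conv_lhs => rw [eq_interpolate hvs hp]
  simp [interpolate_apply, eval_finsetSum, mul_comm]

theorem sum_eval_basis_mul_pow_of_lt (hvs : Set.InjOn v s) {i : ℕ} (hi : i < #s) (x : F) :
    ∑ j ∈ s, (Lagrange.basis s v j).eval x * v j ^ i = x ^ i := by
  simpa using (eval_eq_sum_eval_basis_mul hvs (p := X ^ i) (by simpa using hi) x).symm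

theorem sum_eval_basis_mul_pow_card (hvs : Set.InjOn v s) (x : F) :
    ∑ j ∈ s, (Lagrange.basis s v j).eval x * v j ^ #s = x ^ #s - (nodal s v).eval x := by
  have hdeg : (X ^ #s - nodal s v).degree < (#s : WithBot ℕ) := by
    refine (degree_sub_lt_left ?_ (pow_ne_zero _ X_ne_zero) ?_).trans_eq (degree_X_pow _)
    · rw [degree_X_pow, degree_nodal]
    · rw [leadingCoeff_X_pow, nodal_monic.leadingCoeff]
  have h := eval_eq_sum_eval_basis_mul hvs hdeg x
  simp only [eval_sub, eval_pow, eval_X] at h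
  rw [h]
  refine sum_congr rfl fun j hj => ?_
  rw [eval_nodal_at_node hj, sub_zero]

end Lagrange

theorem abs_sub_sum_taylor_le {f : ℝ → ℝ} {n : ℕ} (hf : ContDiff ℝ (n + 1) f) {M : ℝ}
    (hM : ∀ x, |iteratedDeriv (n + 1) f x| ≤ M) (t u : ℝ) :
    |f (t + u) - ∑ i ∈ range (n + 1), iteratedDeriv i f t * u ^ i / i.factorial|
      ≤ M * |u| ^ (n + 1) / (n + 1).factorial := by
  rcases eq_or_ne u 0 with rfl | hu
  · simp [sum_range_succ']
  have htu : t ≠ t + u := by simpa using hu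
  obtain ⟨ξ, -, hξ⟩ := taylor_mean_remainder_lagrange_iteratedDeriv htu hf.contDiffOn
  have htaylor : taylorWithinEval f n (Set.uIcc t (t + u)) t (t + u)
      = ∑ i ∈ range (n + 1), iteratedDeriv i f t * u ^ i / i.factorial := by
    rw [taylor_within_apply]
    refine sum_congr rfl fun i hi => ?_
    rw [iteratedDerivWithin_eq_iteratedDeriv (uniqueDiffOn_uIcc htu) ?_ Set.left_mem_uIcc,
      add_sub_cancel_left, smul_eq_mul]
    · ring
    · exact hf.contDiffAt.of_le (mod_cast (by grind : i ≤ n + 1))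
  rw [← htaylor, hξ, add_sub_cancel_left, abs_div, abs_mul, abs_pow, Nat.abs_cast]
  gcongr
  exact hM ξ

theorem abs_sum_mul_sub_sum_moment_le {ι : Type*} {f : ℝ → ℝ} {n : ℕ}
    (hf : ContDiff ℝ (n + 1) f) {M : ℝ} (hM : ∀ x, |iteratedDeriv (n + 1) f x| ≤ M)
    (s : Finset ι) (w v : ι → ℝ) {K : ℝ} (hv : ∀ j ∈ s, |v j| ≤ K) (t : ℝ) {h : ℝ}
    (hh : 0 ≤ h) :
    |∑ j ∈ s, w j * f (t + v j * h)
        - ∑ i ∈ range (n + 1), iteratedDeriv i f t * h ^ i / i.factorial * ∑ j ∈ s, w j * v j ^ i|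
      ≤ (∑ j ∈ s, |w j|) * M * (K * h) ^ (n + 1) / (n + 1).factorial := by
  have hswap : ∑ i ∈ range (n + 1), iteratedDeriv i f t * h ^ i / i.factorial
        * ∑ j ∈ s, w j * v j ^ i
      = ∑ j ∈ s, w j * ∑ i ∈ range (n + 1),
          iteratedDeriv i f t * (v j * h) ^ i / i.factorial := by
    simp_rw [mul_sum]
    rw [sum_comm]
    refine sum_congr rfl fun j _ => sum_congr rfl fun i _ => ?_
    ring
  rw [hswap, ← sum_sub_distrib, sum_mul, sum_mul, sum_div]
  refine (abs_sum_le_sum_abs _ _).trans (sum_le_sum fun j hj => ?_)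
  rw [← mul_sub, abs_mul, mul_assoc, mul_div_assoc]
  gcongr
  refine (abs_sub_sum_taylor_le hf hM t (v j * h)).trans ?_
  have hM0 : 0 ≤ M := (abs_nonneg _).trans (hM t)
  rw [abs_mul, abs_of_nonneg hh]
  gcongr
  exact hv j hj

theorem prod_one_sub_two_mul_ne_zero (s : Finset ℤ) : ∏ k ∈ s, (1 - 2 * (k : ℝ)) ≠ 0 := by
  refine prod_ne_zero_iff.mpr fun k _ hk => ?_
  have : (1 - 2 * k : ℤ) = 0 := by exact_mod_cast hk
  omega

noncomputable def dualLiftingNodes (N : ℕ) : Finset ℤ := Icc (-(N : ℤ) / 2 + 1) ((N : ℤ) / 2)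

/-- The sample `f(x^{L+1}_{2m+2j})` sits at `x^L_{m+1/2} + (2j - 1) h`. -/
def dualLiftingOffset (j : ℤ) : ℝ := 2 * j - 1

noncomputable def dualLiftingWeight (N : ℕ) (j : ℤ) : ℝ :=
  ∏ k ∈ (dualLiftingNodes N).erase j, ((1 - 2 * (k : ℝ)) / (2 * (j : ℝ) - 2 * (k : ℝ)))

theorem card_dualLiftingNodes {N : ℕ} (hN : Even N) : #(dualLiftingNodes N) = N := by
  obtain ⟨m, rfl⟩ := hN
  rw [dualLiftingNodes, Int.card_Icc]
  omega

theorem dualLiftingOffset_injective : Function.Injective dualLiftingOffset := by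
  intro a b hab
  simp only [dualLiftingOffset] at hab
  exact_mod_cast (by linarith : (a : ℝ) = b)

theorem abs_dualLiftingOffset_le {N : ℕ} {j : ℤ} (hj : j ∈ dualLiftingNodes N) :
    |dualLiftingOffset j| ≤ N := by
  rw [dualLiftingNodes, mem_Icc] at hj
  rw [dualLiftingOffset, abs_le]
  constructor <;> norm_cast <;> omega

theorem dualLiftingWeight_eq_eval_basis (N : ℕ) (j : ℤ) :
    dualLiftingWeight N j = (Lagrange.basis (dualLiftingNodes N) dualLiftingOffset j).eval 0 := by
  rw [Lagrange.basis, eval_prod]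
  refine prod_congr rfl fun k _ => ?_
  simp only [Lagrange.basisDivisor, eval_mul, eval_C, eval_sub, eval_X, dualLiftingOffset]
  rw [inv_mul_eq_div]
  congr 1 <;> ring

theorem sum_dualLiftingWeight_mul_pow_of_lt {N i : ℕ} (hN : Even N) (hi : i < N) :
    ∑ j ∈ dualLiftingNodes N, dualLiftingWeight N j * dualLiftingOffset j ^ i = 0 ^ i := by
  simp_rw [dualLiftingWeight_eq_eval_basis]
  exact Lagrange.sum_eval_basis_mul_pow_of_lt dualLiftingOffset_injective.injOn
    (by rwa [card_dualLiftingNodes hN]) 0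

theorem sum_dualLiftingWeight_mul_pow_self {N : ℕ} (hN : Even N) (hN0 : 0 < N) :
    ∑ j ∈ dualLiftingNodes N, dualLiftingWeight N j * dualLiftingOffset j ^ N
      = -∏ k ∈ dualLiftingNodes N, (1 - 2 * (k : ℝ)) := by
  simp_rw [dualLiftingWeight_eq_eval_basis]
  have h := Lagrange.sum_eval_basis_mul_pow_card
    (s := dualLiftingNodes N) dualLiftingOffset_injective.injOn 0
  rw [card_dualLiftingNodes hN] at h
  rw [h, Lagrange.eval_nodal, zero_pow hN0.ne', zero_sub]
  simp [dualLiftingOffset]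

theorem sum_range_mul_dualLiftingMoment {N : ℕ} (hN : Even N) (hN0 : 0 < N) (D : ℕ → ℝ)
    (h : ℝ) :
    ∑ i ∈ range N, D i * h ^ i / i.factorial
        * ∑ j ∈ dualLiftingNodes N, dualLiftingWeight N j * dualLiftingOffset j ^ i = D 0 := by
  rw [sum_congr rfl fun i hi => by
      rw [sum_dualLiftingWeight_mul_pow_of_lt hN (mem_range.mp hi)],
    sum_eq_single_of_mem 0 (mem_range.mpr hN0) fun i _ hi => by rw [zero_pow hi, mul_zero]]
  simp

theorem sum_range_succ_mul_dualLiftingMoment {N : ℕ} (hN : Even N) (hN0 : 0 < N)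
    (D : ℕ → ℝ) (h : ℝ) :
    ∑ i ∈ range (N + 1), D i * h ^ i / i.factorial
        * ∑ j ∈ dualLiftingNodes N, dualLiftingWeight N j * dualLiftingOffset j ^ i
      = D 0 - (∏ k ∈ dualLiftingNodes N, (1 - 2 * (k : ℝ))) / N.factorial * D N * h ^ N := by
  rw [sum_range_succ, sum_range_mul_dualLiftingMoment hN hN0,
    sum_dualLiftingWeight_mul_pow_self hN hN0]
  ring

open Finset in
/-- Leading-order Taylor expansion of the detail coefficient of the `N`-th order interpolating
wavelet: `γ = C_N f^{(N)}(t) h^N + O(h^{N+1})` with a nonzero constant `C_N` (of absolute value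
`|∏ (1-2j)|/N!`) independent of `f`, `h` and the position, and `|γ| ≤ C'' ‖f^{(N)}‖_∞ h^N`. -/
theorem detail_coefficient_expansion (N : ℕ) (hN : 0 < N) (hNeven : Even N) :
    ∃ C : ℝ, C ≠ 0 ∧
      |C| = (1 / (N.factorial : ℝ))
        * |∏ j ∈ Finset.Icc (-(N : ℤ) / 2 + 1) ((N : ℤ) / 2), (1 - 2 * (j : ℝ))| ∧
      ∃ C' C'' : ℝ,
        ∀ f : ℝ → ℝ, ContDiff ℝ (N + 1) f →
        ∀ M M' : ℝ,
          (∀ x, |iteratedDeriv (N + 1) f x| ≤ M) →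
          (∀ x, |iteratedDeriv N f x| ≤ M') →
          ∀ t h : ℝ, 0 < h →
            |(f t - ∑ j ∈ Finset.Icc (-(N : ℤ) / 2 + 1) ((N : ℤ) / 2),
                (∏ k ∈ (Finset.Icc (-(N : ℤ) / 2 + 1) ((N : ℤ) / 2)).erase j,
                  ((1 - 2 * (k : ℝ)) / (2 * (j : ℝ) - 2 * (k : ℝ))))
                  * f (t + (2 * (j : ℝ) - 1) * h))
              - C * iteratedDeriv N f t * h ^ N| ≤ C' * M * h ^ (N + 1)
            ∧ |f t - ∑ j ∈ Finset.Icc (-(N : ℤ) / 2 + 1) ((N : ℤ) / 2),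
                (∏ k ∈ (Finset.Icc (-(N : ℤ) / 2 + 1) ((N : ℤ) / 2)).erase j,
                  ((1 - 2 * (k : ℝ)) / (2 * (j : ℝ) - 2 * (k : ℝ))))
                  * f (t + (2 * (j : ℝ) - 1) * h)| ≤ C'' * M' * h ^ N := by
  set P := ∏ k ∈ dualLiftingNodes N, (1 - 2 * (k : ℝ))
  set B := ∑ j ∈ dualLiftingNodes N, |dualLiftingWeight N j|
  refine ⟨P / N.factorial, div_ne_zero (prod_one_sub_two_mul_ne_zero _) (by positivity),
    by rw [abs_div, Nat.abs_cast, one_div_mul_eq_div]; rfl,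
    B * N ^ (N + 1) / (N + 1).factorial, B * N ^ N / N.factorial,
    fun f hf M M' hM hM' t h hh => ⟨?_, ?_⟩⟩
  · have key := abs_sum_mul_sub_sum_moment_le hf hM (dualLiftingNodes N) (dualLiftingWeight N)
      dualLiftingOffset (fun j => abs_dualLiftingOffset_le) t hh.le
    rw [sum_range_succ_mul_dualLiftingMoment hNeven hN, iteratedDeriv_zero, abs_sub_comm,
      sub_right_comm] at key
    exact key.trans_eq (by ring)
  · obtain ⟨n, rfl⟩ : ∃ n, N = n + 1 := ⟨N - 1, by omega⟩
    have key := abs_sum_mul_sub_sum_moment_le (by exact_mod_cast hf.of_succ) hM'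
      (dualLiftingNodes (n + 1)) (dualLiftingWeight (n + 1)) dualLiftingOffset
      (fun j => abs_dualLiftingOffset_le) t hh.le
    rw [sum_range_mul_dualLiftingMoment hNeven hN, iteratedDeriv_zero, abs_sub_comm] at key
    exact key.trans_eq (by ring)
end
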